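/- arXiv:1006.0605 — 4 statements merged into one kernel-verified Lean document; each statement's English description precedes it below -/
import Mathlib

section
/- Let ρ be an admissible weight on [0,∞). If there exists a set D ⊆ ℕ with bounded gaps such that ∑_{k∈D} ρ(k) converges, then the series ∑_{k=1}^∞ ρ(k) converges. -/
open MeasureTheory Filter Set Topology ENNReal

noncomputable def lowerDensityR (M : Set ℝ) : ℝ :=
  liminf (fun N : ℝ => (volume (M ∩ Set.Icc 0 N)).toReal / N) atTop

open Classical in
noncomputable def lowerDensityN (A : Set ℕ) : ℝ :=
  liminf (fun N : ℕ => (((Finset.range N).filter (fun n => n ∈ A)).card : ℝ) / (N : ℝ)) atTop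

section Defs

variable {𝕜 X : Type*} [NontriviallyNormedField 𝕜]
  [NormedAddCommGroup X] [NormedSpace 𝕜 X]

def IsC0Semigroup (T : ℝ → X →L[𝕜] X) : Prop :=
  T 0 = 1 ∧ (∀ s t : ℝ, 0 ≤ s → 0 ≤ t → T (s + t) = (T s).comp (T t)) ∧
    ∀ x : X, ContinuousOn (fun t => T t x) (Set.Ici 0)

def FreqHypercyclicSemigroup (T : ℝ → X →L[𝕜] X) : Prop :=
  ∃ x : X, ∀ U : Set X, IsOpen U → U.Nonempty →
    0 < lowerDensityR {t : ℝ | 0 ≤ t ∧ T t x ∈ U}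

def FreqHypercyclicOp (S : X →L[𝕜] X) : Prop :=
  ∃ x : X, ∀ U : Set X, IsOpen U → U.Nonempty →
    0 < lowerDensityN {n : ℕ | (S ^ n) x ∈ U}

def HypercyclicOp (S : X →L[𝕜] X) : Prop :=
  ∃ x : X, Dense {y : X | ∃ n : ℕ, (S ^ n) x = y}

def ChaoticOp (S : X →L[𝕜] X) : Prop :=
  HypercyclicOp S ∧ Dense {z : X | ∃ n : ℕ, 1 ≤ n ∧ (S ^ n) z = z}

def HypercyclicSemigroup (T : ℝ → X →L[𝕜] X) : Prop :=
  ∃ x : X, Dense {y : X | ∃ t : ℝ, 0 ≤ t ∧ T t x = y}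

def ChaoticSemigroup (T : ℝ → X →L[𝕜] X) : Prop :=
  HypercyclicSemigroup T ∧ Dense {z : X | ∃ t : ℝ, 0 < t ∧ T t z = z}

end Defs

section Pettis

variable {𝕜 X : Type*} [RCLike 𝕜] [NormedAddCommGroup X] [NormedSpace 𝕜 X]

def PettisIntegrableOnIci (𝕜 : Type*) {X : Type*} [RCLike 𝕜] [NormedAddCommGroup X]
    [NormedSpace 𝕜 X] (f : ℝ → X) : Prop :=
  (∀ φ : StrongDual 𝕜 X, IntegrableOn (fun t => φ (f t)) (Set.Ici 0)) ∧
  ∀ E : Set ℝ, MeasurableSet E → E ⊆ Set.Ici 0 →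
    ∃ xE : X, ∀ φ : StrongDual 𝕜 X, φ xE = ∫ t in E, φ (f t)

def SatisfiesFHCSemigroup (T : ℝ → X →L[𝕜] X) : Prop :=
  ∃ X0 : Set X, Dense X0 ∧ ∃ S : ℝ → X → X,
    (∀ x ∈ X0, ∀ t : ℝ, 0 < t → T t (S t x) = x) ∧
    (∀ x ∈ X0, ∀ r t : ℝ, 0 < t → t < r → T t (S r x) = S (r - t) x) ∧
    (∀ x ∈ X0, PettisIntegrableOnIci 𝕜 (fun t => T t x)) ∧
    (∀ x ∈ X0, PettisIntegrableOnIci 𝕜 (fun t => S t x))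

end Pettis

def AdmissibleWeight (ρ : ℝ → ℝ) : Prop :=
  Measurable ρ ∧ (∀ t : ℝ, 0 ≤ t → 0 < ρ t) ∧
    ∃ M : ℝ, 1 ≤ M ∧ ∃ ω : ℝ, ∀ τ : ℝ, 0 ≤ τ → ∀ t : ℝ, 0 < t →
      ρ τ ≤ M * Real.exp (ω * t) * ρ (τ + t)

def BoundedGapsSet (D : Set ℕ) : Prop :=
  ∃ M : ℕ, 0 < M ∧ ∀ n : ℕ, (D ∩ Set.Icc n (n + M)).Nonempty

noncomputable def weightedMeasure (ρ : ℝ → ℝ) : Measure ℝ :=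
  (volume.restrict (Set.Ici 0)).withDensity (fun t => ENNReal.ofReal (ρ t))

def InGenerator {X : Type*} [NormedAddCommGroup X] [NormedSpace ℂ X]
    (T : ℝ → X →L[ℂ] X) (x y : X) : Prop :=
  Tendsto (fun h : ℝ => h⁻¹ • (T h x - x)) (𝓝[>] (0 : ℝ)) (𝓝 y)


/-!
Choose for each `k` some `j ∈ D` with `k + 1 ≤ j ≤ k + 1 + M`. Admissibility over the bounded
shift `j - (k + 1) ≤ M` gives `ρ (k + 1) ≤ C ρ j`, so `ρ (k + 1)` is dominated by `C` times the
sum of `D.indicator ρ` over the window `[k + 1, k + 1 + M]`. Each of the `M + 1` shifts of the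
summable sequence `D.indicator ρ` is summable, hence so is the window sum.
-/

theorem AdmissibleWeight.exists_le_mul_of_le {ρ : ℝ → ℝ} (hρ : AdmissibleWeight ρ) (L : ℝ) :
    ∃ C : ℝ, 0 ≤ C ∧ ∀ τ : ℝ, 0 ≤ τ → ∀ t : ℝ, 0 ≤ t → t ≤ L → ρ τ ≤ C * ρ (τ + t) := by
  obtain ⟨-, hpos, M, hM, ω, hadm⟩ := hρ
  refine ⟨M * Real.exp (|ω| * L), by positivity, fun τ hτ t ht htL => ?_⟩
  rcases ht.eq_or_lt with rfl | ht
  · rw [add_zero]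
    have hexp : 1 ≤ Real.exp (|ω| * L) :=
      Real.one_le_exp (mul_nonneg (abs_nonneg ω) (ht.trans htL))
    exact le_mul_of_one_le_left (hpos τ hτ).le (one_le_mul_of_one_le_of_one_le hM hexp)
  · have hexp : Real.exp (ω * t) ≤ Real.exp (|ω| * L) :=
      Real.exp_le_exp.2 <| (mul_le_mul_of_nonneg_right (le_abs_self ω) ht.le).trans
        (mul_le_mul_of_nonneg_left htL (abs_nonneg ω))
    calc ρ τ ≤ M * Real.exp (ω * t) * ρ (τ + t) := hadm τ hτ t ht
      _ ≤ M * Real.exp (|ω| * L) * ρ (τ + t) := by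
        gcongr
        exact (hpos _ (by linarith)).le

theorem summable_sum_range_nat_add {G : Type*} [AddCommGroup G] [TopologicalSpace G]
    [IsTopologicalAddGroup G] {g : ℕ → G} (hg : Summable g) (m : ℕ) :
    Summable fun n => ∑ i ∈ Finset.range m, g (n + i) :=
  summable_sum fun i _ => (summable_nat_add_iff i).2 hg

theorem le_sum_range_nat_add {N : Type*} [AddCommMonoid N] [PartialOrder N] [AddLeftMono N]
    {g : ℕ → N} (hg : 0 ≤ g) {n m j : ℕ} (hj : j ∈ Set.Icc n (n + m)) :
    g j ≤ ∑ i ∈ Finset.range (m + 1), g (n + i) := by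
  have hi : j - n ∈ Finset.range (m + 1) := Finset.mem_range.2 (by have := hj.2; omega)
  simpa [Nat.add_sub_cancel' hj.1] using
    Finset.single_le_sum (f := fun i => g (n + i)) (fun i _ => hg (n + i)) hi

theorem statement10 (ρ : ℝ → ℝ) (hρ : AdmissibleWeight ρ)
    (D : Set ℕ) (hD : BoundedGapsSet D)
    (h : Summable (fun k : D => ρ ((k : ℕ) : ℝ))) :
    Summable (fun k : ℕ => ρ ((k : ℝ) + 1)) := by
  obtain ⟨M, -, hgap⟩ := hD
  obtain ⟨C, hC, hshift⟩ := hρ.exists_le_mul_of_le M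
  have hpos : ∀ x : ℕ, 0 < ρ x := fun x => hρ.2.1 x x.cast_nonneg
  set g : ℕ → ℝ := D.indicator fun n => ρ n
  have hg : Summable g := summable_subtype_iff_indicator.1 h
  have hg0 : 0 ≤ g := Set.indicator_nonneg fun n _ => (hpos n).le
  refine .of_nonneg_of_le (f := fun k => C * ∑ i ∈ Finset.range (M + 1), g (k + 1 + i))
    (fun k => by exact_mod_cast (hpos (k + 1)).le) (fun k => ?_)
    (((summable_nat_add_iff 1).2 (summable_sum_range_nat_add hg (M + 1))).mul_left C)
  obtain ⟨j, hjD, hj⟩ := hgap (k + 1)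
  have hkj : ((k + 1 : ℕ) : ℝ) + ((j - (k + 1) : ℕ) : ℝ) = j := by
    rw [← Nat.cast_add, Nat.add_sub_cancel' hj.1]
  calc ρ ((k : ℝ) + 1) ≤ C * ρ j := by
        have := hshift (k + 1 : ℕ) (Nat.cast_nonneg _) (j - (k + 1) : ℕ) (Nat.cast_nonneg _)
          (by exact_mod_cast (by have := hj.2; omega : j - (k + 1) ≤ M))
        rwa [hkj, Nat.cast_succ] at this
    _ = C * g j := by simp only [g, Set.indicator_of_mem hjD]
    _ ≤ C * ∑ i ∈ Finset.range (M + 1), g (k + 1 + i) :=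
        mul_le_mul_of_nonneg_left (le_sum_range_nat_add hg0 hj) hC
end

section
/- Let ρ be an admissible weight on [0,∞) with ∫_0^∞ ρ(s) ds < ∞, and let (T_t)_{t≥0} be the translation semigroup on C_0^ρ([0,∞)). Then (T_t)_{t≥0} satisfies the Frequent Hypercyclicity Criterion for semigroups, i.e., there exist a dense subset X_0 of C_0^ρ([0,∞)) and maps S_t : X_0 → C_0^ρ([0,∞)) for t > 0 such that (i) T_t S_t f = f for all f ∈ X_0, t > 0, and T_t S_r f = S_{r−t} f for all f ∈ X_0, r > t > 0; (ii) t ↦ T_t f is Pettis integrable on [0,∞) for all f ∈ X_0; (iii) t ↦ S_t f is Pettis integrable on [0,∞) for all f ∈ X_0. -/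
open MeasureTheory Filter Set Topology ENNReal

/-!
The dense set consists of the functions vanishing near infinity, and `S_t` is the right
translation by `t`, continued to the left of `t` by the value at `0` damped linearly to zero on an
interval of length one; `t ↦ S_t f` is continuous on `(0, ∞)` because
`S_t f = T_{r-t} S_r f` for `t < r`. The orbits `t ↦ T_t f` are then compactly supported, while
`‖S_t f‖ ≤ D ρ(t + L)` because an admissible weight changes by at most a bounded factor over
bounded distances; integrability of `ρ` makes both orbits Bochner integrable, hence Pettis
integrable.
-/

theorem integrableOn_Ici_comp_add {E : Type*} [NormedAddCommGroup E] {f : ℝ → E} {a : ℝ}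
    (hf : IntegrableOn f (Ici a)) (L : ℝ) :
    IntegrableOn (fun t => f (t + L)) (Ici (a - L)) := by
  have := ((measurePreserving_add_right volume L).integrableOn_comp_preimage
    (measurableEmbedding_addRight L) (s := Ici a)).mpr hf
  simpa [Function.comp_def] using this

theorem integrableOn_Ici_of_continuousOn_of_eventually_zero {E : Type*} [NormedAddCommGroup E]
    {f : ℝ → E} {a : ℝ} (hf : ContinuousOn f (Ici a)) (h0 : ∀ᶠ t in atTop, f t = 0) :
    IntegrableOn f (Ici a) := by
  obtain ⟨K, hK⟩ := eventually_atTop.mp h0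
  have hzero : IntegrableOn f (Ici K) :=
    integrableOn_zero.congr_fun (fun t ht => (hK t ht).symm) measurableSet_Ici
  exact ((hf.mono Icc_subset_Ici_self).integrableOn_Icc.union hzero).mono_set
    Ici_subset_Icc_union_Ici

theorem IntegrableOn.pettisIntegrableOnIci (𝕜 : Type*) [RCLike 𝕜] {X : Type*}
    [NormedAddCommGroup X] [NormedSpace 𝕜 X] [NormedSpace ℝ X] [CompleteSpace X] {f : ℝ → X}
    (hf : IntegrableOn f (Ici 0)) : PettisIntegrableOnIci 𝕜 f :=
  ⟨fun φ => φ.integrable_comp hf, fun E _ hE =>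
    ⟨∫ t in E, f t, fun φ => (φ.integral_comp_comm (hf.mono_set hE)).symm⟩⟩

theorem continuousOn_Ioi_of_apply_eq_sub {X : Type*} [NormedAddCommGroup X] [NormedSpace ℝ X]
    {T : ℝ → X →L[ℝ] X} {S : ℝ → X} (hT : ∀ y, ContinuousOn (fun t => T t y) (Ici 0))
    (hS : ∀ r t, 0 < t → t < r → T t (S r) = S (r - t)) : ContinuousOn S (Ioi 0) := by
  intro t₀ ht₀
  have hcont : ContinuousOn (fun t => T (t₀ + 1 - t) (S (t₀ + 1))) (Ioo 0 (t₀ + 1)) :=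
    (hT _).comp (continuousOn_const.sub continuousOn_id) fun t ht => by
      simp only [mem_Ici, sub_nonneg]; exact ht.2.le
  have heq : EqOn (fun t => T (t₀ + 1 - t) (S (t₀ + 1))) S (Ioo 0 (t₀ + 1)) := fun t ht => by
    simpa using hS (t₀ + 1) (t₀ + 1 - t) (by linarith [ht.2]) (by linarith [ht.1])
  exact ((hcont.congr heq.symm).continuousAt
    (Ioo_mem_nhds ht₀ (lt_add_one t₀))).continuousWithinAt

theorem AdmissibleWeight.exists_le_mul_of_sub_le {ρ : ℝ → ℝ} (hρ : AdmissibleWeight ρ) (L : ℝ) :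
    ∃ C, 0 ≤ C ∧ ∀ s r, 0 ≤ s → s ≤ r → r - s ≤ L → ρ s ≤ C * ρ r := by
  obtain ⟨-, hpos, M, hM, ω, hadm⟩ := hρ
  refine ⟨M * Real.exp (|ω| * L), by positivity, fun s r hs hsr hL => ?_⟩
  have hexp : Real.exp (ω * (r - s)) ≤ Real.exp (|ω| * L) :=
    Real.exp_le_exp.mpr ((mul_le_mul_of_nonneg_right (le_abs_self ω) (sub_nonneg.mpr hsr)).trans
      (mul_le_mul_of_nonneg_left hL (abs_nonneg ω)))
  rcases hsr.eq_or_lt with rfl | hlt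
  · have hC : 1 ≤ M * Real.exp (|ω| * L) :=
      one_le_mul_of_one_le_of_one_le hM (by simpa using hexp)
    nlinarith [hpos s hs]
  · calc ρ s ≤ M * Real.exp (ω * (r - s)) * ρ r := by
          simpa using hadm s hs (r - s) (sub_pos.mpr hlt)
      _ ≤ M * Real.exp (|ω| * L) * ρ r := by
          have := (hpos r (hs.trans hsr)).le
          gcongr

def unitRamp (v : ℝ) : ℝ := min 1 (max (v + 1) 0)

theorem continuous_unitRamp : Continuous unitRamp :=
  continuous_const.min ((continuous_id.add continuous_const).max continuous_const)

theorem unitRamp_of_nonneg {v : ℝ} (hv : 0 ≤ v) : unitRamp v = 1 :=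
  min_eq_left (le_max_of_le_left (by linarith))

theorem unitRamp_of_le_neg_one {v : ℝ} (hv : v ≤ -1) : unitRamp v = 0 := by
  simp [unitRamp, max_eq_right (by linarith : v + 1 ≤ 0)]

theorem unitRamp_mem_Icc (v : ℝ) : unitRamp v ∈ Icc 0 1 :=
  ⟨le_min zero_le_one (le_max_right _ _), min_le_left _ _⟩

def rampExtend (u : ℝ → ℝ) (v : ℝ) : ℝ := u (max v 0) * unitRamp v

theorem rampExtend_of_nonneg (u : ℝ → ℝ) {v : ℝ} (hv : 0 ≤ v) : rampExtend u v = u v := by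
  rw [rampExtend, max_eq_left hv, unitRamp_of_nonneg hv, mul_one]

theorem rampExtend_of_le_neg_one (u : ℝ → ℝ) {v : ℝ} (hv : v ≤ -1) : rampExtend u v = 0 := by
  rw [rampExtend, unitRamp_of_le_neg_one hv, mul_zero]

theorem abs_rampExtend_le (u : ℝ → ℝ) (v : ℝ) : |rampExtend u v| ≤ |u (max v 0)| := by
  rw [rampExtend, abs_mul, abs_of_nonneg (unitRamp_mem_Icc v).1]
  exact mul_le_of_le_one_right (abs_nonneg _) (unitRamp_mem_Icc v).2

theorem mem_Ioo_of_rampExtend_ne_zero {u : ℝ → ℝ} {K : ℝ} (hK : 0 ≤ K)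
    (hu : ∀ v, K ≤ v → u v = 0) {v : ℝ} (hv : rampExtend u v ≠ 0) : v ∈ Ioo (-1) K := by
  refine ⟨lt_of_not_ge fun h => hv (rampExtend_of_le_neg_one u h), lt_of_not_ge fun h => hv ?_⟩
  rw [rampExtend_of_nonneg u (hK.trans h), hu v h]

theorem continuous_rampExtend {u : ℝ → ℝ} (hu : ContinuousOn u (Ici 0)) :
    Continuous (rampExtend u) :=
  (hu.comp_continuous (continuous_id.max continuous_const) fun v => le_max_right v 0).mul
    continuous_unitRamp

section WeightedSupNorm

variable {X : Type*} [NormedAddCommGroup X] [NormedSpace ℝ X] {ρ : ℝ → ℝ} {e : X →ₗ[ℝ] ℝ → ℝ}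

theorem norm_le_of_forall_abs_mul_le (hnorm : ∀ x : X, ‖x‖ = ⨆ t : Ici (0 : ℝ), |e x t| * ρ t)
    {x : X} {B : ℝ} (h : ∀ t, 0 ≤ t → |e x t| * ρ t ≤ B) : ‖x‖ ≤ B := by
  rw [hnorm]
  exact ciSup_le fun t => h t t.2

variable (hrange : ∀ u : ℝ → ℝ,
  (ContinuousOn u (Ici 0) ∧ Tendsto (fun t => u t * ρ t) atTop (𝓝 0)) ↔
    ∃ x : X, ∀ t : ℝ, 0 ≤ t → e x t = u t)
include hrange

theorem continuousOn_apply_of_range (x : X) : ContinuousOn (e x) (Ici 0) :=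
  ((hrange (e x)).mpr ⟨x, fun _ _ => rfl⟩).1

theorem exists_apply_eq_of_eventually_zero {u : ℝ → ℝ} (hu : ContinuousOn u (Ici 0))
    (h0 : ∀ᶠ t in atTop, u t = 0) : ∃ x : X, ∀ t, 0 ≤ t → e x t = u t :=
  (hrange u).mp ⟨hu, tendsto_const_nhds.congr' (h0.mono fun t ht => by simp [ht])⟩

theorem exists_apply_eq_rampExtend {x : X} (hx : ∀ᶠ t in atTop, e x t = 0) (r : ℝ) :
    ∃ y : X, ∀ s, 0 ≤ s → e y s = rampExtend (e x) (s - r) := by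
  refine exists_apply_eq_of_eventually_zero hrange
    ((continuous_rampExtend (continuousOn_apply_of_range hrange x)).comp
      (continuous_sub_right r)).continuousOn ?_
  obtain ⟨K, hK⟩ := eventually_atTop.mp hx
  filter_upwards [eventually_ge_atTop (max K 0 + r)] with s hs
  rw [rampExtend_of_nonneg _ (by linarith [le_max_right K 0]),
    hK _ (by linarith [le_max_left K 0])]

theorem exists_rampShift : ∃ S : ℝ → X → X, ∀ x : X, (∀ᶠ r in atTop, e x r = 0) →
    ∀ t s, 0 ≤ s → e (S t x) s = rampExtend (e x) (s - t) := by
  have : ∀ (t : ℝ) (x : X), ∃ y : X, (∀ᶠ r in atTop, e x r = 0) →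
      ∀ s, 0 ≤ s → e y s = rampExtend (e x) (s - t) := fun t x => by
    by_cases hx : ∀ᶠ r in atTop, e x r = 0
    · exact (exists_apply_eq_rampExtend hrange hx t).imp fun y hy _ => hy
    · exact ⟨0, fun h => absurd h hx⟩
  choose S hS using this
  exact ⟨S, fun x hx t => hS t x hx⟩

theorem dense_setOf_eventually_apply_eq_zero (hρ : ∀ t, 0 ≤ t → 0 ≤ ρ t)
    (hnorm : ∀ x : X, ‖x‖ = ⨆ t : Ici (0 : ℝ), |e x t| * ρ t) :
    Dense {x : X | ∀ᶠ t in atTop, e x t = 0} := by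
  rw [Metric.dense_iff]
  intro x ε hε
  obtain ⟨hc, hdecay⟩ := (hrange (e x)).mpr ⟨x, fun _ _ => rfl⟩
  obtain ⟨N, hN⟩ := eventually_atTop.mp
    (hdecay.eventually (Metric.ball_mem_nhds 0 (half_pos hε)))
  obtain ⟨y, hy⟩ := exists_apply_eq_of_eventually_zero hrange
    (u := fun t => e x t * unitRamp (N - t))
    (hc.mul (continuous_unitRamp.comp (continuous_sub_left N)).continuousOn)
    ((eventually_ge_atTop (N + 1)).mono fun t ht => by
      simp [unitRamp_of_le_neg_one (by linarith : N - t ≤ -1)])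
  have hyx : ‖y - x‖ ≤ ε / 2 := norm_le_of_forall_abs_mul_le hnorm fun t ht => by
    rw [map_sub, Pi.sub_apply, hy t ht]
    rcases le_total t N with htN | hNt
    · simpa [unitRamp_of_nonneg (sub_nonneg.mpr htN)] using (half_pos hε).le
    · have hsmall : |e x t * ρ t| < ε / 2 := by simpa using hN t hNt
      have hramp : |unitRamp (N - t) - 1| ≤ 1 := by
        have := unitRamp_mem_Icc (N - t)
        exact abs_sub_le_iff.mpr ⟨by linarith [this.2], by linarith [this.1]⟩
      calc |e x t * unitRamp (N - t) - e x t| * ρ t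
          = |e x t * ρ t| * |unitRamp (N - t) - 1| := by
            rw [← mul_sub_one, abs_mul, abs_mul, abs_of_nonneg (hρ t ht)]; ring
        _ ≤ ε / 2 * 1 := mul_le_mul hsmall.le hramp (abs_nonneg _) (half_pos hε).le
        _ = ε / 2 := mul_one _
  refine ⟨y, ?_, ?_⟩
  · rw [Metric.mem_ball, dist_eq_norm]
    linarith
  · filter_upwards [eventually_ge_atTop (max (N + 1) 0)] with t ht
    rw [hy t (le_of_max_le_right ht),
      unitRamp_of_le_neg_one (by linarith [le_of_max_le_left ht]), mul_zero]

theorem exists_integrableOn_bound_rampExtend (hρ : AdmissibleWeight ρ)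
    (hint : IntegrableOn ρ (Ici 0)) (hnorm : ∀ x : X, ‖x‖ = ⨆ t : Ici (0 : ℝ), |e x t| * ρ t)
    {x : X} (hx : ∀ᶠ t in atTop, e x t = 0) :
    ∃ g : ℝ → ℝ, IntegrableOn g (Ici 0) ∧ ∀ t, 0 ≤ t → ∀ y : X,
      (∀ s, 0 ≤ s → e y s = rampExtend (e x) (s - t)) → ‖y‖ ≤ g t := by
  obtain ⟨K₀, hK₀⟩ := eventually_atTop.mp hx
  set K := max K₀ 0
  have hK : ∀ v, K ≤ v → e x v = 0 := fun v hv => hK₀ v (le_of_max_le_left hv)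
  obtain ⟨B, hB⟩ := isCompact_Icc.exists_bound_of_continuousOn
    ((continuousOn_apply_of_range hrange x).mono (Icc_subset_Ici_self : Icc 0 K ⊆ Ici 0))
  obtain ⟨C, hC, hρC⟩ := hρ.exists_le_mul_of_sub_le (K + 2)
  have hbound : ∀ v, |rampExtend (e x) v| ≤ B := fun v => by
    refine (abs_rampExtend_le _ v).trans ?_
    rcases le_total K (max v 0) with hKv | hvK
    · rw [hK _ hKv, abs_zero]
      exact (norm_nonneg _).trans (hB 0 ⟨le_rfl, le_max_right K₀ 0⟩)
    · exact hB _ ⟨le_max_right v 0, hvK⟩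
  refine ⟨fun t => B * C * ρ (t + (K + 1)), ?_, fun t ht y hy => ?_⟩
  · exact ((integrableOn_Ici_comp_add hint (K + 1)).mono_set
      (Ici_subset_Ici.mpr (by linarith [le_max_right K₀ 0]))).const_mul (B * C)
  refine norm_le_of_forall_abs_mul_le hnorm fun s hs => ?_
  have hB0 : 0 ≤ B := (abs_nonneg _).trans (hbound 0)
  have hρ0 : ∀ r, 0 ≤ r → 0 ≤ ρ r := fun r hr => (hρ.2.1 r hr).le
  rw [hy s hs]
  by_cases hzero : rampExtend (e x) (s - t) = 0
  · rw [hzero, abs_zero, zero_mul]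
    exact mul_nonneg (mul_nonneg hB0 hC) (hρ0 _ (by linarith [le_max_right K₀ 0]))
  obtain ⟨hlo, hhi⟩ := mem_Ioo_of_rampExtend_ne_zero (le_max_right K₀ 0) hK hzero
  calc |rampExtend (e x) (s - t)| * ρ s ≤ B * (C * ρ (t + (K + 1))) :=
        mul_le_mul (hbound _) (hρC s _ hs (by linarith) (by linarith)) (hρ0 s hs) hB0
    _ = B * C * ρ (t + (K + 1)) := (mul_assoc _ _ _).symm

end WeightedSupNorm

theorem statement13 {X : Type*} [NormedAddCommGroup X] [NormedSpace ℝ X] [CompleteSpace X]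
    (ρ : ℝ → ℝ) (hρ : AdmissibleWeight ρ) (hint : IntegrableOn ρ (Set.Ici 0) volume)
    (e : X →ₗ[ℝ] ℝ → ℝ)
    (hinj : ∀ x y : X, (∀ t : ℝ, 0 ≤ t → e x t = e y t) → x = y)
    (hrange : ∀ u : ℝ → ℝ,
      (ContinuousOn u (Set.Ici 0) ∧ Tendsto (fun t => u t * ρ t) atTop (𝓝 0)) ↔
        ∃ x : X, ∀ t : ℝ, 0 ≤ t → e x t = u t)
    (hnorm : ∀ x : X, ‖x‖ = ⨆ t : Set.Ici (0 : ℝ), |e x t| * ρ t)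
    (T : ℝ → X →L[ℝ] X) (hT : IsC0Semigroup T)
    (htrans : ∀ t : ℝ, 0 ≤ t → ∀ x : X, ∀ s : ℝ, 0 ≤ s → e (T t x) s = e x (s + t)) :
    SatisfiesFHCSemigroup T := by
  set X₀ := {x : X | ∀ᶠ t in atTop, e x t = 0}
  obtain ⟨S, hS⟩ := exists_rampShift hrange
  have hTS : ∀ x ∈ X₀, ∀ r t, 0 ≤ t → T t (S r x) = S (r - t) x := fun x hx r t ht =>
    hinj _ _ fun s hs => by
      rw [htrans t ht _ s hs, hS x hx r _ (by linarith), hS x hx (r - t) s hs]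
      ring_nf
  refine ⟨X₀, dense_setOf_eventually_apply_eq_zero hrange (fun t ht => (hρ.2.1 t ht).le) hnorm,
    S, fun x hx t ht => ?_, fun x hx r t ht _ => hTS x hx r t ht.le, fun x hx => ?_,
    fun x hx => ?_⟩
  · rw [hTS x hx t t ht.le, sub_self]
    exact hinj _ _ fun s hs => by rw [hS x hx 0 s hs, sub_zero, rampExtend_of_nonneg _ hs]
  · refine IntegrableOn.pettisIntegrableOnIci ℝ
      (integrableOn_Ici_of_continuousOn_of_eventually_zero (hT.2.2 x) ?_)
    obtain ⟨K, hK⟩ := eventually_atTop.mp hx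
    filter_upwards [eventually_ge_atTop (max K 0)] with t ht
    refine hinj _ _ fun s hs => ?_
    rw [htrans t (le_of_max_le_right ht) x s hs, hK _ (by linarith [le_of_max_le_left ht]),
      map_zero, Pi.zero_apply]
  · obtain ⟨g, hg, hSg⟩ := exists_integrableOn_bound_rampExtend hrange hρ hint hnorm hx
    have hcont : ContinuousOn (fun t => S t x) (Ioi 0) :=
      continuousOn_Ioi_of_apply_eq_sub hT.2.2 fun r t ht _ => hTS x hx r t ht.le
    refine IntegrableOn.pettisIntegrableOnIci ℝ ((integrableOn_Ici_iff_integrableOn_Ioi).mpr ?_)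
    refine Integrable.mono' (hg.mono_set Ioi_subset_Ici_self)
      (hcont.aestronglyMeasurable measurableSet_Ioi) ?_
    filter_upwards [ae_restrict_mem measurableSet_Ioi] with t ht
    exact hSg t ht.le _ (hS x hx t)
end

section
/- Let ρ be an admissible weight on [0,∞), 1 ≤ p < ∞, and let (T_t)_{t≥0} be the translation semigroup on L^p_ρ([0,∞)). If (T_t)_{t≥0} is frequently hypercyclic, then: (a) for every ε > 0 there exists a strictly increasing sequence (n_k)_{k∈ℕ} of natural numbers whose range has positive lower density such that ∑_{k>i} ρ(n_k − n_i) < ε for every i; and (b) ρ is bounded on [0,∞). -/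
open MeasureTheory Filter Set Topology ENNReal

/-!
Let `f` be a frequently hypercyclic vector and `v = 𝟙_[1,2]`. For small `δ` the times `t` with
`‖T_t f - v‖ < δ` form a set `A` of positive lower density, and by Chebyshev's inequality
`f (· + t)` is within `1/2` of `v` outside a set of small `ρ`-weighted measure. An admissible weight
is comparable to itself on intervals of bounded length, so for `t ∈ A` the function `f (· + t)` is
close to `1` on half of `[1, 2]`.

Take a `3`-separated sequence `n_k` in `⌊A⌋` of positive lower density, with `τ_k ∈ A` and
`⌊τ_k⌋ = n_k`. Then `f (· + τ_i)` is close to `1` on half of each window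
`τ_k - τ_i + [1, 2] ⊆ (n_k - n_i, n_k - n_i + 3)`, where `v = 0`. The windows are disjoint, so
`∑_{k > i} ρ (n_k - n_i)` is controlled by the weighted measure of the set where `f (· + τ_i)` is
far from `v`, which is small. Finally `ρ` is bounded because the differences of a set of positive
lower density have bounded gaps.
-/

section Density

open Classical

lemma lowerDensityN_eq_liminf_count (A : Set ℕ) :
    lowerDensityN A = liminf (fun N : ℕ => (Nat.count (· ∈ A) N : ℝ) / N) atTop := by
  simp only [lowerDensityN, Nat.count_eq_card_filter_range]

lemma lowerDensityN_pos_iff {A : Set ℕ} :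
    0 < lowerDensityN A ↔ ∃ d : ℝ, 0 < d ∧ ∀ᶠ N : ℕ in atTop, d * N ≤ Nat.count (· ∈ A) N := by
  rw [lowerDensityN_eq_liminf_count]
  set l := liminf (fun N : ℕ => (Nat.count (· ∈ A) N : ℝ) / N) atTop
  constructor
  · intro h
    refine ⟨l / 2, half_pos h, ?_⟩
    have hbdd : IsBoundedUnder (· ≥ ·) atTop fun N : ℕ => (Nat.count (· ∈ A) N : ℝ) / N :=
      isBoundedUnder_of ⟨0, fun N => by positivity⟩
    filter_upwards [eventually_lt_of_lt_liminf (half_lt_self h) hbdd, eventually_gt_atTop 0]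
      with N hN hN0
    rw [lt_div_iff₀ (by positivity)] at hN
    exact hN.le
  · rintro ⟨d, hd, h⟩
    have hcobdd : IsCoboundedUnder (· ≥ ·) atTop fun N : ℕ => (Nat.count (· ∈ A) N : ℝ) / N :=
      (isBoundedUnder_of ⟨1, fun N => div_le_one_of_le₀ (mod_cast Nat.count_le _)
        N.cast_nonneg⟩).isCoboundedUnder_ge
    refine hd.trans_le (le_liminf_of_le (hf := hcobdd) ?_)
    filter_upwards [h, eventually_gt_atTop 0] with N hN hN0
    rwa [le_div_iff₀ (by positivity)]

lemma infinite_of_eventually_le_count {A : Set ℕ} {d : ℝ} (hd : 0 < d)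
    (h : ∀ᶠ N : ℕ in atTop, d * N ≤ Nat.count (· ∈ A) N) : A.Infinite := by
  intro hfin
  have hlarge := (tendsto_natCast_atTop_atTop.const_mul_atTop hd).eventually_gt_atTop
    (hfin.toFinset.card : ℝ)
  obtain ⟨N, hN, hNlarge⟩ := (h.and hlarge).exists
  have : (Nat.count (· ∈ A) N : ℝ) ≤ hfin.toFinset.card :=
    mod_cast Nat.count_le_card (p := (· ∈ A)) hfin N
  linarith

lemma le_count_range_of_forall_lt {n : ℕ → ℕ} (hn : Function.Injective n) {K N : ℕ}
    (h : ∀ k < K, n k < N) : K ≤ Nat.count (· ∈ Set.range n) N := by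
  rw [Nat.count_eq_card_filter_range]
  calc K = ((Finset.range K).image n).card := by
        rw [Finset.card_image_of_injective _ hn, Finset.card_range]
    _ ≤ _ := Finset.card_le_card fun x hx => by
        obtain ⟨k, hk, rfl⟩ := Finset.mem_image.1 hx
        exact Finset.mem_filter.2 ⟨Finset.mem_range.2 (h k (Finset.mem_range.1 hk)), k, rfl⟩

lemma exists_separated_of_lowerDensityN_pos {B : Set ℕ} (hB : 0 < lowerDensityN B) {g : ℕ}
    (hg : 0 < g) : ∃ n : ℕ → ℕ, StrictMono n ∧ (∀ i k, i < k → n i + g ≤ n k) ∧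
      (∀ k, n k ∈ B) ∧ 0 < lowerDensityN (Set.range n) := by
  obtain ⟨d, hd, hcount⟩ := lowerDensityN_pos_iff.1 hB
  have hinf := infinite_of_eventually_le_count hd hcount
  have hnth : StrictMono (Nat.nth (· ∈ B)) := Nat.nth_strictMono hinf
  have hgap : ∀ i k, i < k → Nat.nth (· ∈ B) (g * i) + g ≤ Nat.nth (· ∈ B) (g * k) := by
    intro i k hik
    calc Nat.nth (· ∈ B) (g * i) + g ≤ Nat.nth (· ∈ B) (g + g * i) := by
          rw [add_comm]; exact hnth.add_le_nat g (g * i)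
      _ ≤ Nat.nth (· ∈ B) (g * k) := hnth.monotone (by nlinarith)
  refine ⟨fun k => Nat.nth (· ∈ B) (g * k),
    fun i k hik => (Nat.lt_add_of_pos_right hg).trans_le (hgap i k hik), hgap,
    fun k => Nat.nth_mem_of_infinite hinf _, lowerDensityN_pos_iff.2 ⟨d / g, by positivity, ?_⟩⟩
  filter_upwards [hcount] with N hN
  set c := Nat.count (· ∈ B) N
  have hK : c ≤ g * ((c + g - 1) / g) := by
    have := Nat.div_add_mod (c + g - 1) g
    have := Nat.mod_lt (c + g - 1) hg
    omega
  have hle : (c + g - 1) / g ≤ Nat.count (· ∈ Set.range fun k => Nat.nth (· ∈ B) (g * k)) N := by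
    refine le_count_range_of_forall_lt (fun i k h => ?_) fun k hk => Nat.nth_lt_of_lt_count ?_
    · exact Nat.eq_of_mul_eq_mul_left hg (hnth.injective h)
    · rw [Nat.lt_div_iff_mul_lt hg] at hk
      have : k * g = g * k := mul_comm _ _
      omega
  have hK' : (c : ℝ) ≤ g * ((c + g - 1) / g : ℕ) := mod_cast hK
  have hle' : (((c + g - 1) / g : ℕ) : ℝ) ≤
      (Nat.count (· ∈ Set.range fun k => Nat.nth (· ∈ B) (g * k)) N : ℝ) := mod_cast hle
  rw [div_mul_eq_mul_div, div_le_iff₀ (by positivity)]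
  nlinarith

lemma volume_inter_Ico_le_count_floor_image (A : Set ℝ) (N : ℕ) :
    volume (A ∩ Ico 0 (N : ℝ)) ≤ Nat.count (· ∈ Nat.floor '' A) N := by
  have hcover : A ∩ Ico 0 (N : ℝ) ⊆
      ⋃ m ∈ (Finset.range N).filter (· ∈ Nat.floor '' A), Ico (m : ℝ) (m + 1) := by
    rintro t ⟨htA, ht0, htN⟩
    refine mem_iUnion₂.2 ⟨⌊t⌋₊, Finset.mem_filter.2 ⟨?_, t, htA, rfl⟩,
      Nat.floor_le ht0, Nat.lt_floor_add_one t⟩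
    exact Finset.mem_range.2 ((Nat.floor_lt ht0).2 htN)
  calc volume (A ∩ Ico 0 (N : ℝ))
      ≤ ∑ m ∈ (Finset.range N).filter (· ∈ Nat.floor '' A), volume (Ico (m : ℝ) (m + 1)) :=
        (measure_mono hcover).trans (measure_biUnion_finset_le _ _)
    _ = Nat.count (· ∈ Nat.floor '' A) N := by
        simp [Real.volume_Ico, Nat.count_eq_card_filter_range]

lemma lowerDensityN_floor_image_pos {A : Set ℝ} (hA : 0 < lowerDensityR A) :
    0 < lowerDensityN (Nat.floor '' A) := by
  have hbdd : IsBoundedUnder (· ≥ ·) atTop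
      fun N : ℝ => (volume (A ∩ Icc 0 N)).toReal / N :=
    ⟨0, eventually_map.2 <| (eventually_ge_atTop 0).mono fun N hN => by positivity⟩
  have hev := tendsto_natCast_atTop_atTop.eventually
    (eventually_lt_of_lt_liminf (half_lt_self hA) hbdd)
  refine lowerDensityN_pos_iff.2 ⟨_, half_pos hA, ?_⟩
  filter_upwards [hev, eventually_gt_atTop 0] with N hN hN0
  rw [lt_div_iff₀ (by positivity),
    measure_congr ((ae_eq_refl A).inter (Ico_ae_eq_Icc (μ := volume))).symm] at hN
  refine hN.le.trans (ENNReal.toReal_le_of_le_ofReal (by positivity) ?_)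
  rw [ENNReal.ofReal_natCast]
  exact volume_inter_Ico_le_count_floor_image A N

lemma exists_add_eq_add_of_one_lt_mul_density {S : Set ℕ} {d : ℝ}
    (hS : ∀ᶠ N : ℕ in atTop, d * N ≤ Nat.count (· ∈ S) N) {K : ℕ} (hK : 1 < K * d)
    (c : ℕ → ℕ) : ∃ i j, i < j ∧ j < K ∧ ∃ a ∈ S, ∃ b ∈ S, a + c i = b + c j := by
  by_contra! hdisj
  set C := ∑ i ∈ Finset.range K, c i
  have hcount : ∀ N, K * Nat.count (· ∈ S) N ≤ N + C := by
    intro N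
    set T : ℕ → Finset ℕ := fun i => ((Finset.range N).filter (· ∈ S)).image (· + c i)
    have hT : ∀ i, (T i).card = Nat.count (· ∈ S) N := fun i => by
      rw [Finset.card_image_of_injective _ (add_left_injective _), Nat.count_eq_card_filter_range]
    have hpair : (Finset.range K : Set ℕ).PairwiseDisjoint T := by
      have key : ∀ i j, i < j → j < K → Disjoint (T i) (T j) := by
        intro i j hij hjK
        simp only [T, Finset.disjoint_left, Finset.mem_image, Finset.mem_filter]
        rintro _ ⟨a, ⟨-, ha⟩, rfl⟩ ⟨b, ⟨-, hb⟩, hab⟩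
        exact hdisj i j hij hjK a ha b hb hab.symm
      intro i hi j hj hij
      rcases hij.lt_or_gt with h | h
      · exact key i j h (Finset.mem_range.1 hj)
      · exact (key j i h (Finset.mem_range.1 hi)).symm
    have hsub : (Finset.range K).biUnion T ⊆ Finset.range (N + C) := by
      simp only [T, Finset.biUnion_subset, Finset.image_subset_iff, Finset.mem_filter,
        Finset.mem_range]
      intro i hi x hx
      have := Finset.single_le_sum (fun j _ => Nat.zero_le (c j)) (Finset.mem_range.2 hi)
      omega
    calc K * Nat.count (· ∈ S) N = ∑ i ∈ Finset.range K, (T i).card := by simp [hT]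
      _ = ((Finset.range K).biUnion T).card := (Finset.card_biUnion hpair).symm
      _ ≤ N + C := by simpa using Finset.card_le_card hsub
  have hlarge := (tendsto_natCast_atTop_atTop.const_mul_atTop (sub_pos.2 hK)).eventually_gt_atTop
    (C : ℝ)
  obtain ⟨N, hN, hNlarge⟩ := (hS.and hlarge).exists
  have : (K : ℝ) * Nat.count (· ∈ S) N ≤ N + C := mod_cast hcount N
  nlinarith

lemma exists_gap_bound_of_lowerDensityN_pos {S : Set ℕ} (hS : 0 < lowerDensityN S) :
    ∃ L : ℕ, ∀ g : ℕ, ∃ a ∈ S, ∃ b ∈ S, a + g ≤ b ∧ b ≤ a + g + L := by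
  obtain ⟨d, hd, hcount⟩ := lowerDensityN_pos_iff.1 hS
  by_contra! hgap
  choose G hG using hgap
  -- `c (j + 1) - c i ∈ [G (c j), G (c j) + c j]` for `i ≤ j`, a range of gaps that `S` avoids
  let c : ℕ → ℕ := fun j => Nat.rec 0 (fun _ cj => cj + G cj) j
  have hc : Monotone c := monotone_nat_of_le_succ fun j => Nat.le_add_right _ _
  have hK : 1 < ((⌈d⁻¹⌉₊ + 1 : ℕ) : ℝ) * d := by
    have := Nat.le_ceil d⁻¹
    push_cast
    nlinarith [mul_inv_cancel₀ hd.ne']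
  obtain ⟨i, j, hij, -, a, ha, b, hb, hab⟩ := exists_add_eq_add_of_one_lt_mul_density hcount hK c
  obtain ⟨j, rfl⟩ : ∃ j', j = j' + 1 := ⟨j - 1, by omega⟩
  have hci : c i ≤ c j := hc (by omega)
  have hcj : c (j + 1) = c j + G (c j) := rfl
  have := hG (c j) b hb a ha (by omega)
  omega

end Density

section Weight

variable {ρ : ℝ → ℝ}

lemma AdmissibleWeight.exists_le_mul_of_le_add (hρ : AdmissibleWeight ρ) (L : ℝ) :
    ∃ C : ℝ, 0 < C ∧ ∀ a b, 0 ≤ a → a ≤ b → b ≤ a + L → ρ a ≤ C * ρ b := by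
  obtain ⟨-, hpos, M, hM, ω, hadm⟩ := hρ
  refine ⟨M * Real.exp (|ω| * L), by positivity, fun a b ha hab hbL => ?_⟩
  have hexp : Real.exp (ω * (b - a)) ≤ Real.exp (|ω| * L) := Real.exp_le_exp.2 <|
    calc ω * (b - a) ≤ |ω| * (b - a) := mul_le_mul_of_nonneg_right (le_abs_self ω) (by linarith)
      _ ≤ |ω| * L := mul_le_mul_of_nonneg_left (by linarith) (abs_nonneg ω)
  have hρb := hpos b (ha.trans hab)
  rcases hab.eq_or_lt with rfl | hlt
  · have : 1 ≤ Real.exp (|ω| * L) := Real.one_le_exp (by nlinarith [abs_nonneg ω])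
    exact le_mul_of_one_le_left hρb.le (one_le_mul_of_one_le_of_one_le hM this)
  · calc ρ a ≤ M * Real.exp (ω * (b - a)) * ρ (a + (b - a)) := hadm a ha _ (by linarith)
      _ ≤ M * Real.exp (|ω| * L) * ρ b := by rw [add_sub_cancel]; gcongr

lemma AdmissibleWeight.exists_forall_le_of_lowerDensityN_pos (hρ : AdmissibleWeight ρ)
    {S : Set ℕ} (hS : 0 < lowerDensityN S) {c : ℝ}
    (hc : ∀ a ∈ S, ∀ b ∈ S, a < b → ρ ((b : ℝ) - a) ≤ c) : ∃ C, ∀ t, 0 ≤ t → ρ t ≤ C := by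
  obtain ⟨L, hL⟩ := exists_gap_bound_of_lowerDensityN_pos hS
  obtain ⟨C, hC0, hC⟩ := hρ.exists_le_mul_of_le_add (L + 2)
  refine ⟨C * c, fun t ht => ?_⟩
  obtain ⟨a, ha, b, hb, hab, hba⟩ := hL (⌈t⌉₊ + 1)
  have hlo : t ≤ (b : ℝ) - a := by
    have : (a : ℝ) + (⌈t⌉₊ + 1) ≤ b := mod_cast hab
    linarith [Nat.le_ceil t]
  have hhi : (b : ℝ) - a ≤ t + (L + 2) := by
    have : (b : ℝ) ≤ a + (⌈t⌉₊ + 1) + L := mod_cast hba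
    linarith [Nat.ceil_lt_add_one ht]
  calc ρ t ≤ C * ρ ((b : ℝ) - a) := hC t _ ht hlo hhi
    _ ≤ C * c := mul_le_mul_of_nonneg_left (hc a ha b hb (by omega)) hC0.le

lemma weightedMeasure_apply {S : Set ℝ} (hS : MeasurableSet S) (hS0 : S ⊆ Ici 0) :
    weightedMeasure ρ S = ∫⁻ x in S, ENNReal.ofReal (ρ x) := by
  rw [weightedMeasure, withDensity_apply _ hS, Measure.restrict_restrict hS,
    inter_eq_left.2 hS0]

lemma ofReal_mul_volume_le_weightedMeasure {S : Set ℝ} (hS : MeasurableSet S)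
    (hS0 : S ⊆ Ici 0) {c : ℝ} (hc : ∀ x ∈ S, c ≤ ρ x) :
    ENNReal.ofReal c * volume S ≤ weightedMeasure ρ S := by
  rw [weightedMeasure_apply hS hS0, ← setLIntegral_const]
  exact setLIntegral_mono' hS fun x hx => ENNReal.ofReal_le_ofReal (hc x hx)

lemma weightedMeasure_le_ofReal_mul_volume {S : Set ℝ} (hS : MeasurableSet S)
    (hS0 : S ⊆ Ici 0) {c : ℝ} (hc : ∀ x ∈ S, ρ x ≤ c) :
    weightedMeasure ρ S ≤ ENNReal.ofReal c * volume S := by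
  rw [weightedMeasure_apply hS hS0, ← setLIntegral_const]
  exact setLIntegral_mono' hS fun x hx => ENNReal.ofReal_le_ofReal (hc x hx)

end Weight

lemma FreqHypercyclicSemigroup.exists_shifts_approx {μ : Measure ℝ} {p : ℝ≥0∞} [Fact (1 ≤ p)]
    {T : ℝ → Lp ℝ p μ →L[ℝ] Lp ℝ p μ} (hfh : FreqHypercyclicSemigroup T) (hp : p ≠ ⊤)
    (htrans : ∀ t : ℝ, 0 ≤ t → ∀ f : Lp ℝ p μ, ⇑(T t f) =ᵐ[μ] fun x => f (x + t)) {w : ℝ → ℝ} (hw : MemLp w p μ) {r η : ℝ}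
    (hr : 0 < r) (hη : 0 < η) :
    ∃ F : ℝ → ℝ, Measurable F ∧ ∃ A : Set ℝ, 0 < lowerDensityR A ∧ A ⊆ Ici 0 ∧
      ∀ s ∈ A, μ {x | r ≤ |F (x + s) - w x|} ≤ ENNReal.ofReal η := by
  obtain ⟨f, hf⟩ := hfh
  have hp0 : p ≠ 0 := (zero_lt_one.trans_le (Fact.out : (1 : ℝ≥0∞) ≤ p)).ne'
  have hq : 0 < p.toReal := ENNReal.toReal_pos hp0 hp
  set δ := r * η ^ p.toReal⁻¹
  have hδ : ENNReal.ofReal δ ^ p.toReal = ENNReal.ofReal r ^ p.toReal * ENNReal.ofReal η := by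
    rw [ENNReal.ofReal_rpow_of_pos (by positivity), Real.mul_rpow hr.le (by positivity),
      Real.rpow_inv_rpow hη.le hq.ne', ENNReal.ofReal_mul (by positivity),
      ENNReal.ofReal_rpow_of_pos hr]
  refine ⟨f, (Lp.stronglyMeasurable f).measurable, {t | 0 ≤ t ∧ T t f ∈ Metric.ball (hw.toLp w) δ},
    hf _ Metric.isOpen_ball ⟨_, Metric.mem_ball_self (by positivity)⟩, fun t ht => ht.1, ?_⟩
  rintro s ⟨hs0, hs⟩
  have hu : (fun x => f (x + s) - w x) =ᵐ[μ] ⇑(T s f) - ⇑(hw.toLp w) :=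
    ((htrans s hs0 f).sub hw.coeFn_toLp).symm
  have hnorm : eLpNorm (fun x => f (x + s) - w x) p μ < ENNReal.ofReal δ := by
    rw [eLpNorm_congr_ae hu, ← Lp.edist_def, edist_lt_ofReal]
    exact hs
  have hcheb := mul_meas_ge_le_pow_eLpNorm' μ hp0 hp
    (((Lp.aestronglyMeasurable _).sub (Lp.aestronglyMeasurable _)).congr hu.symm)
    (ENNReal.ofReal r)
  have hset : {x | ENNReal.ofReal r ≤ ‖f (x + s) - w x‖ₑ} = {x | r ≤ |f (x + s) - w x|} := by
    ext x
    simp [Real.enorm_eq_ofReal_abs, ENNReal.ofReal_le_ofReal_iff (abs_nonneg _)]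
  rw [hset] at hcheb
  refine (ENNReal.mul_le_mul_iff_right ?_ ?_).1 (hcheb.trans ?_)
  · exact (ENNReal.rpow_pos (ENNReal.ofReal_pos.2 hr) ENNReal.ofReal_ne_top).ne'
  · exact ENNReal.rpow_ne_top_of_nonneg hq.le ENNReal.ofReal_ne_top
  · rw [← hδ]
    exact ENNReal.rpow_le_rpow hnorm.le hq.le

section Windows

variable {ρ : ℝ → ℝ} {F : ℝ → ℝ}

lemma half_le_volume_of_weightedMeasure_le (hF : Measurable F) {s c η : ℝ} (hc : 0 < c)
    (hρc : ∀ x ∈ Icc (1 : ℝ) 2, c ≤ ρ x) (hηc : η ≤ c / 2)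
    (hs : weightedMeasure ρ {x | 1 / 2 ≤ |F (x + s) - (Icc (1 : ℝ) 2).indicator 1 x|} ≤
      ENNReal.ofReal η) :
    2⁻¹ ≤ volume {y ∈ Icc (1 : ℝ) 2 | |F (y + s) - 1| < 1 / 2} := by
  set bad := {y ∈ Icc (1 : ℝ) 2 | 1 / 2 ≤ |F (y + s) - 1|}
  have hbad : MeasurableSet bad := measurableSet_Icc.inter <| measurableSet_le measurable_const
    ((hF.comp (measurable_add_const s)).sub_const 1).abs
  have hsub : bad ⊆ {x | 1 / 2 ≤ |F (x + s) - (Icc (1 : ℝ) 2).indicator 1 x|} := by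
    rintro x ⟨hx, hxbad⟩
    simpa [indicator_of_mem hx] using hxbad
  have hmul : ENNReal.ofReal c * volume bad ≤ ENNReal.ofReal c * 2⁻¹ :=
    calc ENNReal.ofReal c * volume bad ≤ weightedMeasure ρ bad :=
          ofReal_mul_volume_le_weightedMeasure hbad
            (fun x hx => (zero_le_one.trans hx.1.1 : (0 : ℝ) ≤ x)) fun x hx => hρc x hx.1
      _ ≤ ENNReal.ofReal η := (measure_mono hsub).trans hs
      _ ≤ ENNReal.ofReal (c / 2) := ENNReal.ofReal_le_ofReal hηc
      _ = ENNReal.ofReal c * 2⁻¹ := by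
          rw [ENNReal.ofReal_div_of_pos two_pos, ENNReal.ofReal_ofNat, div_eq_mul_inv]
  have hbad_le := (ENNReal.mul_le_mul_iff_right (ENNReal.ofReal_pos.2 hc).ne'
    ENNReal.ofReal_ne_top).1 hmul
  have hcover : Icc (1 : ℝ) 2 ⊆ {y ∈ Icc (1 : ℝ) 2 | |F (y + s) - 1| < 1 / 2} ∪ bad :=
    fun y hy => (lt_or_ge |F (y + s) - 1| (1 / 2)).imp (⟨hy, ·⟩) (⟨hy, ·⟩)
  have hle := (measure_mono (μ := volume) hcover).trans (measure_union_le _ _)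
  rw [Real.volume_Icc, show (2 : ℝ) - 1 = 1 by norm_num, ENNReal.ofReal_one] at hle
  calc (2⁻¹ : ℝ≥0∞) = 1 - 2⁻¹ := ENNReal.one_sub_inv_two.symm
    _ ≤ _ := tsub_le_iff_right.2 (hle.trans (add_le_add_right hbad_le _))

lemma sum_weight_le_of_weightedMeasure_le (hF : Measurable F) {C η : ℝ} (hC0 : 0 < C)
    (hη : 0 ≤ η) (hC : ∀ a b, 0 ≤ a → a ≤ b → b ≤ a + 3 → ρ a ≤ C * ρ b)
    {n : ℕ → ℕ} (hgap : ∀ i k, i < k → n i + 3 ≤ n k)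
    {τ : ℕ → ℝ} (hτ : ∀ k, (n k : ℝ) ≤ τ k ∧ τ k < n k + 1)
    (hgood : ∀ k, 2⁻¹ ≤ volume {y ∈ Icc (1 : ℝ) 2 | |F (y + τ k) - 1| < 1 / 2}) {i : ℕ}
    (hi : weightedMeasure ρ {x | 1 / 2 ≤ |F (x + τ i) - (Icc (1 : ℝ) 2).indicator 1 x|} ≤
      ENNReal.ofReal η)
    (s : Finset ℕ) (hs : ∀ k ∈ s, i < k) :
    ∑ k ∈ s, ρ ((n k : ℝ) - n i) ≤ 2 * C * η := by
  -- the part of the window `τ k - τ i + [1, 2]` where `F (· + τ i)` is close to `1`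
  set E : ℕ → Set ℝ := fun k =>
    (· + (τ i - τ k)) ⁻¹' {y ∈ Icc (1 : ℝ) 2 | |F (y + τ k) - 1| < 1 / 2}
  have hE : ∀ k x, x ∈ E k ↔ x + (τ i - τ k) ∈ Icc (1 : ℝ) 2 ∧ |F (x + τ i) - 1| < 1 / 2 := by
    intro k x
    simp only [E, mem_preimage, mem_ofPred_eq, show x + (τ i - τ k) + τ k = x + τ i by ring]
  have hEmeas : ∀ k, MeasurableSet (E k) := fun k =>
    (measurableSet_Icc.inter (measurableSet_lt
      ((hF.comp (measurable_add_const _)).sub_const 1).abs measurable_const)).preimage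
      (measurable_add_const _)
  have hm3 : ∀ k, i < k → (3 : ℝ) ≤ (n k : ℝ) - n i := fun k hik => by
    have : ((n i + 3 : ℕ) : ℝ) ≤ n k := mod_cast hgap i k hik
    push_cast at this
    linarith
  have hwin : ∀ k x, x ∈ E k → (n k : ℝ) - n i < x ∧ x < (n k : ℝ) - n i + 3 := by
    intro k x hx
    obtain ⟨⟨h1, h2⟩, -⟩ := (hE k x).1 hx
    obtain ⟨hi1, hi2⟩ := hτ i
    obtain ⟨hk1, hk2⟩ := hτ k
    constructor <;> linarith
  have hdisj : (s : Set ℕ).PairwiseDisjoint E := by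
    have key : ∀ k l, k < l → Disjoint (E k) (E l) := fun k l hkl =>
      disjoint_left.2 fun x hxk hxl => by
        have : ((n k + 3 : ℕ) : ℝ) ≤ n l := mod_cast hgap k l hkl
        push_cast at this
        linarith [(hwin k x hxk).2, (hwin l x hxl).1]
    intro k _ l _ hkl
    rcases hkl.lt_or_gt with h | h
    · exact key k l h
    · exact (key l k h).symm
  have hunion : (⋃ k ∈ s, E k) ⊆
      {x | 1 / 2 ≤ |F (x + τ i) - (Icc (1 : ℝ) 2).indicator 1 x|} := by
    simp only [iUnion_subset_iff]
    intro k hk x hx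
    have hx3 : (3 : ℝ) < x := by linarith [(hwin k x hx).1, hm3 k (hs k hk)]
    have hclose := ((hE k x).1 hx).2
    rw [mem_ofPred_eq, indicator_of_notMem (fun h => by linarith [h.2]), sub_zero]
    have := abs_sub_abs_le_abs_sub (1 : ℝ) (F (x + τ i))
    rw [abs_one, abs_sub_comm] at this
    linarith
  have hterm : ∀ k ∈ s, ENNReal.ofReal (ρ ((n k : ℝ) - n i) / (2 * C)) ≤
      weightedMeasure ρ (E k) := by
    intro k hk
    have hik := hs k hk
    calc ENNReal.ofReal (ρ ((n k : ℝ) - n i) / (2 * C))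
        = ENNReal.ofReal (ρ ((n k : ℝ) - n i) / C) * 2⁻¹ := by
          rw [mul_comm, ← div_div, ENNReal.ofReal_div_of_pos two_pos, ENNReal.ofReal_ofNat,
            div_eq_mul_inv]
      _ ≤ ENNReal.ofReal (ρ ((n k : ℝ) - n i) / C) * volume (E k) := by
          rw [measure_preimage_add_right]
          exact mul_le_mul_right (hgood k) _
      _ ≤ weightedMeasure ρ (E k) := by
          refine ofReal_mul_volume_le_weightedMeasure (hEmeas k)
            (fun x hx => ?_) fun x hx => ?_
          · exact (by linarith [(hwin k x hx).1, hm3 k hik] : (0 : ℝ) ≤ x)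
          · rw [div_le_iff₀ hC0, mul_comm]
            exact hC _ _ (by linarith [hm3 k hik]) (hwin k x hx).1.le (hwin k x hx).2.le
  have hsum : ENNReal.ofReal (∑ k ∈ s, ρ ((n k : ℝ) - n i) / (2 * C)) ≤ ENNReal.ofReal η :=
    calc ENNReal.ofReal (∑ k ∈ s, ρ ((n k : ℝ) - n i) / (2 * C))
        ≤ ∑ k ∈ s, ENNReal.ofReal (ρ ((n k : ℝ) - n i) / (2 * C)) :=
          Finset.le_sum_of_subadditive _ ENNReal.ofReal_zero.le
            (fun _ _ => ENNReal.ofReal_add_le) _ _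
      _ ≤ ∑ k ∈ s, weightedMeasure ρ (E k) := Finset.sum_le_sum hterm
      _ = weightedMeasure ρ (⋃ k ∈ s, E k) :=
          (measure_biUnion_finset hdisj fun k _ => hEmeas k).symm
      _ ≤ ENNReal.ofReal η := (measure_mono hunion).trans hi
  rw [ENNReal.ofReal_le_ofReal_iff hη, ← Finset.sum_div, div_le_iff₀ (by positivity)] at hsum
  linarith

end Windows

lemma AdmissibleWeight.exists_seq_sum_le_of_freqHypercyclic {ρ : ℝ → ℝ} (hρ : AdmissibleWeight ρ)
    {p : ℝ≥0∞} [Fact (1 ≤ p)] (hp : p ≠ ⊤)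
    (T : ℝ → Lp ℝ p (weightedMeasure ρ) →L[ℝ] Lp ℝ p (weightedMeasure ρ))
    (htrans : ∀ t : ℝ, 0 ≤ t → ∀ f : Lp ℝ p (weightedMeasure ρ),
      ⇑(T t f) =ᵐ[weightedMeasure ρ] fun x => f (x + t))
    (hfh : FreqHypercyclicSemigroup T) {ε : ℝ} (hε : 0 < ε) :
    ∃ n : ℕ → ℕ, StrictMono n ∧ 0 < lowerDensityN (Set.range n) ∧
      ∀ i (s : Finset ℕ), (∀ k ∈ s, i < k) → ∑ k ∈ s, ρ ((n k : ℝ) - n i) ≤ ε := by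
  obtain ⟨C, hC0, hC⟩ := hρ.exists_le_mul_of_le_add 3
  have hρ0 : 0 < ρ 0 := hρ.2.1 0 le_rfl
  set η := min (ρ 0 / C / 2) (ε / (2 * C))
  have hη : 0 < η := lt_min (by positivity) (by positivity)
  have hw : MemLp ((Icc (1 : ℝ) 2).indicator (1 : ℝ → ℝ)) p (weightedMeasure ρ) := by
    refine memLp_indicator_const p measurableSet_Icc (1 : ℝ) (Or.inr (ne_top_of_le_ne_top ?_
      (weightedMeasure_le_ofReal_mul_volume measurableSet_Icc (c := C * ρ 3)
        (fun x hx => (zero_le_one.trans hx.1 : (0 : ℝ) ≤ x)) fun x hx => ?_)))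
    · simp [Real.volume_Icc, ENNReal.mul_eq_top]
    · exact hC x 3 (zero_le_one.trans hx.1) (by linarith [hx.2]) (by linarith [hx.1])
  obtain ⟨F, hF, A, hA, hA0, hAη⟩ :=
    hfh.exists_shifts_approx hp htrans hw one_half_pos hη
  have hgood : ∀ s ∈ A, 2⁻¹ ≤ volume {y ∈ Icc (1 : ℝ) 2 | |F (y + s) - 1| < 1 / 2} :=
    fun s hs => half_le_volume_of_weightedMeasure_le hF (div_pos hρ0 hC0)
      (fun x hx => (div_le_iff₀ hC0).2 <| by
        rw [mul_comm]; exact hC 0 x le_rfl (by linarith [hx.1]) (by linarith [hx.2]))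
      (min_le_left _ _) (hAη s hs)
  obtain ⟨n, hn, hgap, hmem, hdens⟩ :=
    exists_separated_of_lowerDensityN_pos (lowerDensityN_floor_image_pos hA) three_pos
  choose τ hτA hτn using hmem
  have hτ : ∀ k, (n k : ℝ) ≤ τ k ∧ τ k < n k + 1 := fun k => by
    rw [← hτn k]
    exact ⟨Nat.floor_le (hA0 (hτA k)), Nat.lt_floor_add_one _⟩
  refine ⟨n, hn, hdens, fun i s hs => ?_⟩
  calc ∑ k ∈ s, ρ ((n k : ℝ) - n i) ≤ 2 * C * η :=
        sum_weight_le_of_weightedMeasure_le hF hC0 hη.le hC hgap hτ (fun k => hgood _ (hτA k))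
          (hAη _ (hτA i)) s hs
    _ ≤ 2 * C * (ε / (2 * C)) := by gcongr; exact min_le_right _ _
    _ = ε := by field_simp

theorem statement14_general (ρ : ℝ → ℝ) (hρ : AdmissibleWeight ρ)
    (p : ℝ≥0∞) [Fact (1 ≤ p)] (hp : p ≠ ⊤)
    (T : ℝ → Lp ℝ p (weightedMeasure ρ) →L[ℝ] Lp ℝ p (weightedMeasure ρ))
    (htrans : ∀ t : ℝ, 0 ≤ t → ∀ f : Lp ℝ p (weightedMeasure ρ),
      ⇑(T t f) =ᵐ[weightedMeasure ρ] fun x => f (x + t))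
    (hfh : FreqHypercyclicSemigroup T) :
    (∀ ε : ℝ, 0 < ε → ∃ n : ℕ → ℕ, StrictMono n ∧ 0 < lowerDensityN (Set.range n) ∧
      ∀ i : ℕ, Summable (fun k : ℕ => if i < k then ρ ((n k : ℝ) - (n i : ℝ)) else 0) ∧
        ∑' k : ℕ, (if i < k then ρ ((n k : ℝ) - (n i : ℝ)) else 0) < ε) ∧
    ∃ C : ℝ, ∀ t : ℝ, 0 ≤ t → ρ t ≤ C := by
  refine ⟨fun ε hε => ?_, ?_⟩
  · obtain ⟨n, hn, hdens, hsum⟩ := hρ.exists_seq_sum_le_of_freqHypercyclic hp T htrans hfh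
      (half_pos hε)
    refine ⟨n, hn, hdens, fun i => ?_⟩
    have hnonneg : ∀ k, 0 ≤ if i < k then ρ ((n k : ℝ) - (n i : ℝ)) else 0 := fun k => by
      split_ifs with hik
      · exact (hρ.2.1 _ (sub_nonneg.2 (mod_cast (hn hik).le))).le
      · exact le_rfl
    have hpartial : ∀ N, ∑ k ∈ Finset.range N,
        (if i < k then ρ ((n k : ℝ) - (n i : ℝ)) else 0) ≤ ε / 2 := fun N => by
      rw [← Finset.sum_filter]
      exact hsum i _ fun k hk => (Finset.mem_filter.1 hk).2
    have hsummable := summable_of_sum_range_le hnonneg hpartial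
    exact ⟨hsummable, (hsummable.tsum_le_of_sum_range_le hpartial).trans_lt (half_lt_self hε)⟩
  · obtain ⟨n, hn, hdens, hsum⟩ := hρ.exists_seq_sum_le_of_freqHypercyclic hp T htrans hfh one_pos
    refine hρ.exists_forall_le_of_lowerDensityN_pos hdens (c := 1) fun _ ⟨i, hi⟩ _ ⟨k, hk⟩ hik => ?_
    subst hi hk
    simpa using hsum i {k} (by simpa using hn.lt_iff_lt.1 hik)

theorem statement14 (ρ : ℝ → ℝ) (hρ : AdmissibleWeight ρ)
    (p : ℝ≥0∞) [Fact (1 ≤ p)] (hp : p ≠ ⊤)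
    (T : ℝ → Lp ℝ p (weightedMeasure ρ) →L[ℝ] Lp ℝ p (weightedMeasure ρ))
    (hT : IsC0Semigroup T)
    (htrans : ∀ t : ℝ, 0 ≤ t → ∀ f : Lp ℝ p (weightedMeasure ρ),
      ⇑(T t f) =ᵐ[weightedMeasure ρ] fun x => f (x + t))
    (hfh : FreqHypercyclicSemigroup T) :
    (∀ ε : ℝ, 0 < ε → ∃ n : ℕ → ℕ, StrictMono n ∧ 0 < lowerDensityN (Set.range n) ∧
      ∀ i : ℕ, Summable (fun k : ℕ => if i < k then ρ ((n k : ℝ) - (n i : ℝ)) else 0) ∧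
        ∑' k : ℕ, (if i < k then ρ ((n k : ℝ) - (n i : ℝ)) else 0) < ε) ∧
    ∃ C : ℝ, ∀ t : ℝ, 0 ≤ t → ρ t ≤ C :=
  statement14_general ρ hρ p hp T htrans hfh
end

section
/- Let X be a separable Banach space and (T_t)_{t≥0} a C0-semigroup on X such that there is a dense subset X_0 ⊆ X with t ↦ T_t x Pettis integrable on [0,∞) for every x ∈ X_0. Then the continuous linear operator R : X → X defined by Rx = ∫_0^1 T_t x dt has dense range; in particular, I − T_1 has dense range in X. -/
open MeasureTheory Filter Set Topology ENNReal

/-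
If `φ ∈ X'` annihilates the range of `R`, then for `x ∈ X0` the continuous function
`g t = φ (T t x)`, integrable on `[0, ∞)` by the Pettis hypothesis, has vanishing integrals over
all windows `[s, s + 1]`, since `∫ s..s+1, g = φ (R (T s x))`. Hence `G u = ∫ 0..u, g` is
`1`-periodic on `[0, ∞)` and converges as `u → ∞`, so `G ≡ G 0 = 0` and `g ≡ 0`; in particular
`φ x = g 0 = 0`. Thus `φ` vanishes on the dense set `X0`, and Hahn–Banach gives the density of the
range. If instead `φ` annihilates the range of `I - T 1`, then `g` itself is `1`-periodic, so its
window integrals are periodic and tend to `0`; they vanish and the same argument applies.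
-/

theorem Submodule.dense_of_forall_dual_eq_zero {𝕜 X : Type*} [RCLike 𝕜] [NormedAddCommGroup X]
    [NormedSpace 𝕜 X] (p : Submodule 𝕜 X)
    (h : ∀ φ : StrongDual 𝕜 X, (∀ y ∈ p, φ y = 0) → φ = 0) : Dense (p : Set X) := by
  -- Separate a point outside the closure from it in the quotient by the closure.
  refine fun x => by_contra fun hx => ?_
  have : IsClosed (p.topologicalClosure : Set X) := p.isClosed_topologicalClosure
  obtain ⟨g, hgx⟩ := SeparatingDual.exists_ne_zero (R := 𝕜)
    (x := Submodule.Quotient.mk (p := p.topologicalClosure) x)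
    (by rwa [Ne, Submodule.Quotient.mk_eq_zero, ← SetLike.mem_coe, p.topologicalClosure_coe])
  have hφ := h (g.comp p.topologicalClosure.mkQL) fun y hy => by
    simp [(Submodule.Quotient.mk_eq_zero _).2 (p.le_topologicalClosure hy)]
  exact hgx (by simpa using congr($hφ x))

theorem eq_of_tendsto_of_periodicOn {α : Type*} [TopologicalSpace α] [T2Space α] {f : ℝ → α}
    {a p : ℝ} {L : α} (hp : 0 < p) (hper : ∀ s, a ≤ s → f (s + p) = f s)
    (hf : Tendsto f atTop (𝓝 L)) {s : ℝ} (hs : a ≤ s) : f s = L := by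
  have hiter : ∀ n : ℕ, f (s + n * p) = f s := by
    intro n
    induction n with
    | zero => simp
    | succ n ih =>
      rw [Nat.cast_succ, add_one_mul, ← add_assoc, hper _ (by nlinarith [n.cast_nonneg (α := ℝ)]), ih]
  have hlim : Tendsto (fun n : ℕ => s + n * p) atTop atTop :=
    tendsto_atTop_add_const_left _ s (tendsto_natCast_atTop_atTop.atTop_mul_const hp)
  have hconst : Tendsto (fun n : ℕ => f (s + n * p)) atTop (𝓝 (f s)) := by
    simpa only [hiter] using tendsto_const_nhds
  exact tendsto_nhds_unique hconst (hf.comp hlim)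

theorem MeasureTheory.IntegrableOn.intervalIntegrable_of_Ici {E : Type*} [NormedAddCommGroup E]
    {g : ℝ → E} {a b c : ℝ} (hg : IntegrableOn g (Ici a)) (hb : a ≤ b) (hc : a ≤ c) :
    IntervalIntegrable g volume b c :=
  (hg.mono_set fun _ hu => (le_min hb hc).trans hu.1).intervalIntegrable

section

variable {E : Type*} [NormedAddCommGroup E] [NormedSpace ℝ E] {g : ℝ → E} {a p : ℝ}

theorem eq_zero_of_forall_intervalIntegral_eq_zero [CompleteSpace E] (hg : ContinuousOn g (Ici a))
    (h : ∀ b, a ≤ b → ∫ t in a..b, g t = 0) {t : ℝ} (ht : a ≤ t) : g t = 0 := by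
  have hsub : Ioi t ⊆ Ici a := fun u hu => ht.trans hu.le
  have hderiv : HasDerivWithinAt (fun b => ∫ u in a..b, g u) (g t) (Ici t) t :=
    intervalIntegral.integral_hasDerivWithinAt_right
      ((hg.mono fun _ hu => (le_min le_rfl ht).trans hu.1).intervalIntegrable)
      ((hg.stronglyMeasurableAtFilter_nhdsWithin measurableSet_Ici t).filter_mono
        (nhdsWithin_mono _ hsub))
      ((hg t ht).mono hsub)
  have hzero : HasDerivWithinAt (fun b => ∫ u in a..b, g u) 0 (Ici t) t :=
    (hasDerivWithinAt_const t (Ici t) (0 : E)).congr_of_mem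
      (fun b hb => h b (ht.trans hb)) self_mem_Ici
  exact (uniqueDiffOn_Ici t t self_mem_Ici).eq_deriv _ hderiv hzero

theorem eq_zero_of_forall_window_integral_eq_zero [CompleteSpace E] (hp : 0 < p)
    (hg : ContinuousOn g (Ici a)) (hint : IntegrableOn g (Ici a)) (h : ∀ s, a ≤ s → ∫ t in s..s + p, g t = 0) {t : ℝ}
    (ht : a ≤ t) : g t = 0 := by
  let G : ℝ → E := fun b => ∫ u in a..b, g u
  have hGper : ∀ s, a ≤ s → G (s + p) = G s := fun s hs => by
    simp only [G]
    rw [← intervalIntegral.integral_add_adjacent_intervals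
      (hint.intervalIntegrable_of_Ici le_rfl hs) (hint.intervalIntegrable_of_Ici hs (by linarith)),
      h s hs, add_zero]
  have hGlim : Tendsto G atTop (𝓝 (∫ u in Ioi a, g u)) :=
    intervalIntegral_tendsto_integral_Ioi a (hint.mono_set Ioi_subset_Ici_self) tendsto_id
  have hG : ∀ b, a ≤ b → G b = 0 := fun b hb => by
    rw [eq_of_tendsto_of_periodicOn hp hGper hGlim hb,
      ← eq_of_tendsto_of_periodicOn hp hGper hGlim le_rfl]
    exact intervalIntegral.integral_same
  exact eq_zero_of_forall_intervalIntegral_eq_zero hg hG ht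

theorem window_integral_eq_zero_of_periodicOn (hp : 0 < p) (hint : IntegrableOn g (Ici a))
    (hper : ∀ t, a ≤ t → g (t + p) = g t) {s : ℝ} (hs : a ≤ s) : ∫ t in s..s + p, g t = 0 := by
  let W : ℝ → E := fun s => ∫ t in s..s + p, g t
  have hWper : ∀ s, a ≤ s → W (s + p) = W s := fun s hs => by
    simp only [W, ← intervalIntegral.integral_comp_add_right]
    refine intervalIntegral.integral_congr fun t ht => hper t ?_
    rw [uIcc_of_le (by linarith)] at ht
    exact hs.trans ht.1
  have hWlim : Tendsto W atTop (𝓝 0) := by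
    have hGlim : Tendsto (fun b => ∫ u in a..b, g u) atTop (𝓝 (∫ u in Ioi a, g u)) :=
      intervalIntegral_tendsto_integral_Ioi a (hint.mono_set Ioi_subset_Ici_self) tendsto_id
    have hdiff := (hGlim.comp (tendsto_atTop_add_const_right _ p tendsto_id)).sub hGlim
    rw [sub_self] at hdiff
    refine hdiff.congr' ((eventually_ge_atTop a).mono fun s hs => ?_)
    exact intervalIntegral.integral_interval_sub_left
      (hint.intervalIntegrable_of_Ici le_rfl (by simp only [id]; linarith))
      (hint.intervalIntegrable_of_Ici le_rfl hs)
  exact eq_of_tendsto_of_periodicOn hp hWper hWlim hs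

end

namespace IsC0Semigroup

variable {X : Type*} [NormedAddCommGroup X] [NormedSpace ℝ X] {T : ℝ → X →L[ℝ] X}

theorem intervalIntegrable_apply (hT : IsC0Semigroup T) (x : X) {a b : ℝ} (ha : 0 ≤ a)
    (hb : 0 ≤ b) : IntervalIntegrable (fun t => T t x) volume a b :=
  ((hT.2.2 x).mono fun _ ht => (le_min ha hb).trans ht.1).intervalIntegrable

noncomputable def unitIntervalIntegral (hT : IsC0Semigroup T) : X →ₗ[ℝ] X where
  toFun x := ∫ t in (0 : ℝ)..1, T t x
  map_add' x y := by
    simp only [map_add]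
    exact intervalIntegral.integral_add (hT.intervalIntegrable_apply x le_rfl zero_le_one)
      (hT.intervalIntegrable_apply y le_rfl zero_le_one)
  map_smul' c x := by
    simp only [map_smul, RingHom.id_apply]
    exact intervalIntegral.integral_smul c _

theorem window_integral_dual_eq [CompleteSpace X] (hT : IsC0Semigroup T) (φ : StrongDual ℝ X)
    (x : X) {s : ℝ} (hs : 0 ≤ s) :
    ∫ t in s..s + 1, φ (T t x) = φ (hT.unitIntervalIntegral (T s x)) := by
  change _ = φ (∫ t in (0 : ℝ)..1, T t (T s x))
  have hshift := intervalIntegral.integral_comp_add_right (a := 0) (b := 1) (fun t => φ (T t x)) s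
  rw [zero_add, add_comm 1 s] at hshift
  rw [← hshift, ← φ.intervalIntegral_comp_comm (hT.intervalIntegrable_apply _ le_rfl zero_le_one)]
  refine intervalIntegral.integral_congr fun t ht => ?_
  rw [uIcc_of_le zero_le_one] at ht
  simp only [hT.2.1 t s ht.1 hs, ContinuousLinearMap.comp_apply]

theorem dual_eq_zero_of_forall_window_integral_eq_zero [CompleteSpace X] (hT : IsC0Semigroup T)
    {X0 : Set X} (hX0 : Dense X0) {φ : StrongDual ℝ X}
    (hint : ∀ x ∈ X0, IntegrableOn (fun t => φ (T t x)) (Ici 0))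
    (h : ∀ x ∈ X0, ∀ s, 0 ≤ s → ∫ t in s..s + 1, φ (T t x) = 0) : φ = 0 := by
  refine DFunLike.coe_injective (Continuous.ext_on hX0 φ.continuous (0 : StrongDual ℝ X).continuous
    fun x hx => ?_)
  have h0 := eq_zero_of_forall_window_integral_eq_zero one_pos
    (φ.continuous.comp_continuousOn (hT.2.2 x)) (hint x hx) (h x hx) le_rfl
  simpa [hT.1] using h0

end IsC0Semigroup

theorem statement17_general {X : Type*} [NormedAddCommGroup X] [NormedSpace ℝ X]
    [CompleteSpace X]
    (T : ℝ → X →L[ℝ] X) (hT : IsC0Semigroup T)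
    (X0 : Set X) (hX0 : Dense X0)
    (hP : ∀ x ∈ X0, PettisIntegrableOnIci ℝ (fun t => T t x)) :
    Dense (Set.range (fun x : X => ∫ t in (0 : ℝ)..1, T t x)) ∧
    Dense (Set.range (fun x : X => x - T 1 x)) := by
  have hint (φ : StrongDual ℝ X) : ∀ x ∈ X0, IntegrableOn (fun t => φ (T t x)) (Ici 0) :=
    fun x hx => (hP x hx).1 φ
  constructor
  · refine (LinearMap.range hT.unitIntervalIntegral).dense_of_forall_dual_eq_zero fun φ hφ =>
      hT.dual_eq_zero_of_forall_window_integral_eq_zero hX0 (hint φ) fun x _ s hs => ?_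
    rw [hT.window_integral_dual_eq φ x hs]
    exact hφ _ (LinearMap.mem_range_self _ _)
  · refine (LinearMap.range ((1 - T 1 : X →L[ℝ] X) : X →ₗ[ℝ] X)).dense_of_forall_dual_eq_zero
      fun φ hφ => hT.dual_eq_zero_of_forall_window_integral_eq_zero hX0 (hint φ)
        fun x hx s hs => window_integral_eq_zero_of_periodicOn one_pos (hint φ x hx)
          (fun t ht => ?_) hs
    have hperiod := hφ _ (LinearMap.mem_range_self _ (T t x))
    rw [add_comm, hT.2.1 1 t zero_le_one ht]
    simp only [ContinuousLinearMap.coe_coe, sub_apply,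
      one_apply_eq_self, map_sub, sub_eq_zero] at hperiod
    exact hperiod.symm

theorem statement17 {X : Type*} [NormedAddCommGroup X] [NormedSpace ℝ X]
    [CompleteSpace X] [TopologicalSpace.SeparableSpace X]
    (T : ℝ → X →L[ℝ] X) (hT : IsC0Semigroup T)
    (X0 : Set X) (hX0 : Dense X0)
    (hP : ∀ x ∈ X0, PettisIntegrableOnIci ℝ (fun t => T t x)) :
    Dense (Set.range (fun x : X => ∫ t in (0 : ℝ)..1, T t x)) ∧
    Dense (Set.range (fun x : X => x - T 1 x)) :=
  statement17_general T hT X0 hX0 hP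
end
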